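/- arXiv:2109.15229 — 7 statements merged into one kernel-verified Lean document; each statement's English description precedes it below -/
import Mathlib

section
/- Let n ≥ 2 be an integer, let k be an integer with 1 ≤ k ≤ n−1, let R ∈ ℝ, let I ⊆ (0,∞) be a nonempty open interval, and let σ : ℝ → ℝ be differentiable on I. Then R·y^k − (n−k)·(n − σ(y))^k + k·y·σ'(y)·(n − σ(y))^{k−1} = 0 for all y ∈ I if and only if there exists a constant B ∈ ℝ such that (n − σ(y))^k = (R/n)·y^k + B·y^{k−n} for all y ∈ I. -/
/-! With `u = (n - σ)^k` the condition reads `y u' + (n - k) u = R y^k`, an Euler equation.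
The integrating factor `y^(n-k-1)` turns it into `(y^(n-k) u - (R/n) y^n)' = 0`, so on an interval
it holds exactly when `y^(n-k) u - (R/n) y^n` is a constant `B`. -/

open Set

theorem IsOpen.eqOn_deriv_zero_iff_exists_const {s : Set ℝ} {f : ℝ → ℝ} (hs : IsOpen s)
    (hs' : IsPreconnected s) (hf : DifferentiableOn ℝ f s) :
    s.EqOn (deriv f) 0 ↔ ∃ a, ∀ x ∈ s, f x = a := by
  refine ⟨hs.exists_is_const_of_deriv_eq_zero hs' hf, fun ⟨a, ha⟩ x hx => ?_⟩
  have hfa : f =ᶠ[nhds x] fun _ => a := Filter.eventually_of_mem (hs.mem_nhds hx) ha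
  simp [hfa.deriv_eq]

theorem hasDerivAt_zpow_mul_sub_pow {n k : ℕ} {R y u' : ℝ} {u : ℝ → ℝ} (hn : n ≠ 0)
    (hy : y ≠ 0) (hu : HasDerivAt u u' y) :
    HasDerivAt (fun z => z ^ ((n : ℤ) - k) * u z - R / n * z ^ n)
      (y ^ ((n : ℤ) - k - 1) * (y * u' + (n - k) * u y - R * y ^ k)) y := by
  refine (((hasDerivAt_zpow ((n : ℤ) - k) y (.inl hy)).fun_mul hu).fun_sub
    ((hasDerivAt_pow n y).const_mul (R / n))).congr_deriv ?_
  have hy' : y ^ ((n : ℤ) - k) = y ^ ((n : ℤ) - k - 1) * y := by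
    rw [← zpow_add_one₀ hy]; ring_nf
  have hpow : y ^ (n - 1) = y ^ ((n : ℤ) - k - 1) * y ^ k := by
    rw [← zpow_natCast, ← zpow_natCast, ← zpow_add₀ hy]
    congr 1; omega
  rw [hy', hpow]
  field_simp
  push_cast
  ring

theorem zpow_mul_sub_pow_eq_iff {n k : ℕ} {R B y v : ℝ} (hy : y ≠ 0) :
    y ^ ((n : ℤ) - k) * v - R / n * y ^ n = B ↔ v = R / n * y ^ k + B * y ^ ((k : ℤ) - n) := by
  have h1 : y ^ ((k : ℤ) - n) * y ^ ((n : ℤ) - k) = 1 := by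
    rw [← zpow_add₀ hy]; simp
  have h2 : y ^ ((n : ℤ) - k) * y ^ k = y ^ n := by
    rw [← zpow_natCast, ← zpow_natCast, ← zpow_add₀ hy]; simp
  constructor
  · rintro rfl
    linear_combination (R / n * y ^ k - v) * h1 - R / n * y ^ ((k : ℤ) - n) * h2
  · rintro rfl
    linear_combination (R / n) * h2 + B * h1

theorem euler_ode_iff_exists_eq {s : Set ℝ} {n k : ℕ} {R : ℝ} {u : ℝ → ℝ} (hs : IsOpen s)
    (hs' : IsPreconnected s) (hs0 : (0 : ℝ) ∉ s) (hn : n ≠ 0) (hu : DifferentiableOn ℝ u s) :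
    (∀ y ∈ s, y * deriv u y + (n - k) * u y = R * y ^ k) ↔
      ∃ B : ℝ, ∀ y ∈ s, u y = R / n * y ^ k + B * y ^ ((k : ℤ) - n) := by
  set F : ℝ → ℝ := fun z => z ^ ((n : ℤ) - k) * u z - R / n * z ^ n
  have hy0 : ∀ y ∈ s, y ≠ 0 := fun y hy h => hs0 (h ▸ hy)
  have hF : ∀ y ∈ s, HasDerivAt F
      (y ^ ((n : ℤ) - k - 1) * (y * deriv u y + (n - k) * u y - R * y ^ k)) y := fun y hy =>
    hasDerivAt_zpow_mul_sub_pow hn (hy0 y hy)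
      ((hu y hy).differentiableAt (hs.mem_nhds hy)).hasDerivAt
  calc (∀ y ∈ s, y * deriv u y + (n - k) * u y = R * y ^ k)
      ↔ s.EqOn (deriv F) 0 := forall₂_congr fun y hy => by
        rw [(hF y hy).deriv, Pi.zero_apply, mul_eq_zero, sub_eq_zero,
          or_iff_right (zpow_ne_zero _ (hy0 y hy))]
    _ ↔ ∃ B, ∀ y ∈ s, F y = B :=
        hs.eqOn_deriv_zero_iff_exists_const hs' fun y hy =>
          (hF y hy).differentiableAt.differentiableWithinAt
    _ ↔ _ := exists_congr fun B => forall₂_congr fun y hy => zpow_mul_sub_pow_eq_iff (hy0 y hy)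

theorem stmt_1_general (n k : ℕ) (hn : 2 ≤ n) (R : ℝ)
    (a b : ℝ) (ha : 0 ≤ a)
    (σ : ℝ → ℝ) (hσ : ∀ y ∈ Set.Ioo a b, DifferentiableAt ℝ σ y) :
    (∀ y ∈ Set.Ioo a b,
        R * y ^ k - ((n : ℝ) - k) * ((n : ℝ) - σ y) ^ k
          + (k : ℝ) * y * deriv σ y * ((n : ℝ) - σ y) ^ (k - 1) = 0) ↔
      ∃ B : ℝ, ∀ y ∈ Set.Ioo a b,
        ((n : ℝ) - σ y) ^ k = (R / n) * y ^ k + B * y ^ ((k : ℤ) - (n : ℤ)) := by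
  have hu : ∀ y ∈ Ioo a b, HasDerivAt (fun z => ((n : ℝ) - σ z) ^ k)
      (k * ((n : ℝ) - σ y) ^ (k - 1) * -deriv σ y) y := fun y hy =>
    ((hσ y hy).hasDerivAt.const_sub (n : ℝ)).fun_pow k
  rw [← euler_ode_iff_exists_eq isOpen_Ioo isPreconnected_Ioo (fun h => ha.not_gt h.1)
    (by omega) fun y hy => (hu y hy).differentiableAt.differentiableWithinAt]
  refine forall₂_congr fun y hy => ?_
  rw [(hu y hy).deriv]
  constructor <;> intro h <;> linear_combination -h

theorem stmt_1 (n k : ℕ) (hn : 2 ≤ n) (hk1 : 1 ≤ k) (hk2 : k ≤ n - 1) (R : ℝ)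
    (a b : ℝ) (hab : a < b) (ha : 0 ≤ a)
    (σ : ℝ → ℝ) (hσ : ∀ y ∈ Set.Ioo a b, DifferentiableAt ℝ σ y) :
    (∀ y ∈ Set.Ioo a b,
        R * y ^ k - ((n : ℝ) - k) * ((n : ℝ) - σ y) ^ k
          + (k : ℝ) * y * deriv σ y * ((n : ℝ) - σ y) ^ (k - 1) = 0) ↔
      ∃ B : ℝ, ∀ y ∈ Set.Ioo a b,
        ((n : ℝ) - σ y) ^ k = (R / n) * y ^ k + B * y ^ ((k : ℤ) - (n : ℤ)) :=
  stmt_1_general n k hn R a b ha σ hσ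
end

section
/- Let n ≥ 2 be an integer, let A, B, C, D, μ, λ ∈ ℝ, let I ⊆ (0,∞) be a nonempty open interval, and define ψ(y) = y − A·y^{1−n} − B·y^{2−n} − C·y² − D·y³. If ψ'(y) = (μ − (n−1)/y)·ψ(y) + n − λ·y for all y ∈ I, then either μ = 0 or both B = 0 and D = 0. -/
/-!
Multiplying the soliton equation by `y ^ (n - 1)` turns it into the vanishing, on an interval, of a
polynomial in `y` with monomials `1, y, y ^ n, y ^ (n + 1), y ^ (n + 2)`; the `A`-term drops out
since `(y ^ (n - 1) ψ)' = y ^ (n - 1) (ψ' + (n - 1) ψ / y)`. The polynomial is therefore zero, and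
for `n ≥ 2` the coefficients of `y` and `y ^ (n + 2)` are `-μ B` and `-μ D`.
-/

open Polynomial Set

noncomputable def extremalProfile (n : ℕ) (A B C D y : ℝ) : ℝ :=
  y - A * y ^ ((1 : ℤ) - n) - B * y ^ ((2 : ℤ) - n) - C * y ^ 2 - D * y ^ 3

/-- `y ^ (n - 1)` times the defect `μ ψ + n - λ y - (ψ' + (n - 1) / y * ψ)` of the soliton equation
for `ψ = extremalProfile n A B C D`. -/
noncomputable def solitonDefect (n : ℕ) (A B C D μ lam : ℝ) : ℝ[X] :=
  monomial 0 (B - μ * A) - monomial 1 (μ * B) + monomial n (μ - lam + (n + 1) * C)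
    + monomial (n + 1) ((n + 2) * D - μ * C) - monomial (n + 2) (μ * D)

section

variable {n : ℕ} {A B C D μ lam y : ℝ}

theorem zpow_sub_natCast {k : ℤ} (hy : y ≠ 0) : y ^ (k - n) = y ^ k * (y ^ n)⁻¹ := by
  rw [zpow_sub₀ hy, zpow_natCast, div_eq_mul_inv]

theorem deriv_extremalProfile_add_mul (hy : y ≠ 0) :
    deriv (extremalProfile n A B C D) y + (n - 1) / y * extremalProfile n A B C D y
      = n - B * y ^ ((1 : ℤ) - n) - (n + 1) * C * y - (n + 2) * D * y ^ 2 := by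
  have hderiv : HasDerivAt (extremalProfile n A B C D) _ y :=
    ((((hasDerivAt_id y).sub ((hasDerivAt_zpow _ y (Or.inl hy)).const_mul A)).sub
      ((hasDerivAt_zpow _ y (Or.inl hy)).const_mul B)).sub
      ((hasDerivAt_pow 2 y).const_mul C)).sub ((hasDerivAt_pow 3 y).const_mul D)
  rw [hderiv.deriv, extremalProfile, show (1 : ℤ) - n - 1 = (0 : ℤ) - n by ring, show (2 : ℤ) - n - 1 = (1 : ℤ) - n by ring,
    zpow_sub_natCast hy, zpow_sub_natCast hy, zpow_sub_natCast hy]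
  push_cast
  field_simp
  ring

theorem eval_solitonDefect (hy : y ≠ 0)
    (hode : deriv (extremalProfile n A B C D) y
      = (μ - (n - 1) / y) * extremalProfile n A B C D y + n - lam * y) :
    (solitonDefect n A B C D μ lam).eval y = 0 := by
  have hres : μ * extremalProfile n A B C D y + n - lam * y
      - (deriv (extremalProfile n A B C D) y + (n - 1) / y * extremalProfile n A B C D y) = 0 := by
    rw [hode]; ring
  rw [deriv_extremalProfile_add_mul hy, extremalProfile, zpow_sub_natCast hy,
    zpow_sub_natCast hy] at hres
  have hyn : y ^ n ≠ 0 := pow_ne_zero n hy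
  refine (mul_eq_zero.1 (?_ : y * _ = 0)).resolve_left hy
  simp only [solitonDefect, eval_add, eval_sub, eval_monomial]
  field_simp at hres
  linear_combination hres

theorem coeff_one_solitonDefect (hn : 2 ≤ n) :
    (solitonDefect n A B C D μ lam).coeff 1 = -(μ * B) := by
  simp [solitonDefect, coeff_monomial, show n ≠ 1 by omega, show n ≠ 0 by omega]

theorem coeff_add_two_solitonDefect :
    (solitonDefect n A B C D μ lam).coeff (n + 2) = -(μ * D) := by
  simp [solitonDefect, coeff_monomial]

end

theorem stmt_3_general (n : ℕ) (hn : 2 ≤ n) (A B C D μ lam : ℝ)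
    (a b : ℝ) (hab : a < b)
    (ψ : ℝ → ℝ)
    (hψ : ∀ y : ℝ, ψ y = y - A * y ^ ((1 : ℤ) - (n : ℤ)) - B * y ^ ((2 : ℤ) - (n : ℤ))
        - C * y ^ 2 - D * y ^ 3)
    (hode : ∀ y ∈ Set.Ioo a b,
        deriv ψ y = (μ - ((n : ℝ) - 1) / y) * ψ y + (n : ℝ) - lam * y) :
    μ = 0 ∨ (B = 0 ∧ D = 0) := by
  obtain rfl : ψ = extremalProfile n A B C D := funext hψ
  have hroots : (Ioo a b \ {0}).Infinite := (Ioo_infinite hab).sdiff (finite_singleton 0)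
  have hdefect : solitonDefect n A B C D μ lam = 0 :=
    eq_zero_of_infinite_isRoot _ <| hroots.mono fun y hy => eval_solitonDefect hy.2 (hode y hy.1)
  have hμB : μ * B = 0 := by
    simpa [coeff_one_solitonDefect hn] using congrArg (coeff · 1) hdefect
  have hμD : μ * D = 0 := by
    simpa [coeff_add_two_solitonDefect] using congrArg (coeff · (n + 2)) hdefect
  rcases eq_or_ne μ 0 with hμ | hμ
  · exact Or.inl hμ
  · exact Or.inr ⟨(mul_eq_zero.1 hμB).resolve_left hμ, (mul_eq_zero.1 hμD).resolve_left hμ⟩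

theorem stmt_3 (n : ℕ) (hn : 2 ≤ n) (A B C D μ lam : ℝ)
    (a b : ℝ) (hab : a < b) (ha : 0 ≤ a)
    (ψ : ℝ → ℝ)
    (hψ : ∀ y : ℝ, ψ y = y - A * y ^ ((1 : ℤ) - (n : ℤ)) - B * y ^ ((2 : ℤ) - (n : ℤ))
        - C * y ^ 2 - D * y ^ 3)
    (hode : ∀ y ∈ Set.Ioo a b,
        deriv ψ y = (μ - ((n : ℝ) - 1) / y) * ψ y + (n : ℝ) - lam * y) :
    μ = 0 ∨ (B = 0 ∧ D = 0) :=
  stmt_3_general n hn A B C D μ lam a b hab ψ hψ hode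
end

section
/- Let n ≥ 1 be an integer, let h and k be distinct positive integers, let A_k, B_k, A_h, B_h ∈ ℝ, and let I ⊆ (0,∞) be a nonempty open interval. If (A_k + B_k·y^{−n})^h = (A_h + B_h·y^{−n})^k for all y ∈ I, then B_k = 0, B_h = 0, and A_k^h = A_h^k. -/
/-! Substituting `t = y⁻ⁿ`, which is injective on `(0, ∞)`, the hypothesis says that the polynomials
`(A_k + B_k t)^h` and `(A_h + B_h t)^k` agree at infinitely many points, hence coincide. Their degrees
are `h` or `0` and `k` or `0` according as `B_k`, `B_h` vanish, and `h ≠ k` leaves only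
`B_k = B_h = 0`; evaluating at `t = 0` gives `A_k^h = A_h^k`. -/

open Polynomial

namespace Polynomial

variable {R : Type*} [CommRing R] [IsDomain R]

lemma natDegree_linear_pow [DecidableEq R] (a b : R) (m : ℕ) :
    ((C a + C b * X) ^ m).natDegree = if b = 0 then 0 else m := by
  split_ifs with hb
  · rw [hb, map_zero, zero_mul, add_zero, ← C_pow, natDegree_C]
  · rw [natDegree_pow, add_comm, natDegree_linear hb, mul_one]

lemma eq_of_linear_pow_eq_linear_pow {a b c d : R} {h k : ℕ} (hh : h ≠ 0) (hk : k ≠ 0)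
    (hhk : h ≠ k) (H : (C a + C b * X) ^ h = (C c + C d * X) ^ k) :
    b = 0 ∧ d = 0 ∧ a ^ h = c ^ k := by
  classical
  have hdeg := congrArg natDegree H
  rw [natDegree_linear_pow, natDegree_linear_pow] at hdeg
  have hbd : b = 0 ∧ d = 0 := by split_ifs at hdeg <;> simp_all
  refine ⟨hbd.1, hbd.2, ?_⟩
  simpa using congrArg (eval 0) H

end Polynomial

lemma Set.infinite_image_zpow_Ioo {a b : ℝ} (hab : a < b) (ha : 0 ≤ a) {m : ℤ} (hm : m ≠ 0) :
    ((· ^ m) '' Set.Ioo a b).Infinite :=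
  (Set.Ioo_infinite hab).image <|
    (zpow_left_injOn₀ hm).mono fun _ hy => ha.trans hy.1.le

theorem stmt_5 (n : ℕ) (hn : 1 ≤ n) (h k : ℕ) (hh : 1 ≤ h) (hk : 1 ≤ k) (hhk : h ≠ k)
    (Ak Bk Ah Bh : ℝ) (a b : ℝ) (hab : a < b) (ha : 0 ≤ a)
    (heq : ∀ y ∈ Set.Ioo a b,
        (Ak + Bk * y ^ (-(n : ℤ))) ^ h = (Ah + Bh * y ^ (-(n : ℤ))) ^ k) :
    Bk = 0 ∧ Bh = 0 ∧ Ak ^ h = Ah ^ k := by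
  refine eq_of_linear_pow_eq_linear_pow (by omega) (by omega) hhk
    (eq_of_infinite_eval_eq _ _ ?_)
  refine (Set.infinite_image_zpow_Ioo hab ha (m := -(n : ℤ)) (by omega)).mono ?_
  rintro _ ⟨y, hy, rfl⟩
  simpa using heq y hy
end

section
/- Let n and k be integers with 2 ≤ k ≤ n, let B, C, D, A_k, B_k ∈ ℝ, and let I ⊆ (0,∞) be a nonempty open interval. If (B·y^{1−n} + C·(n+1)·y + D·(n+2)·y²)^k = A_k·y^k + B_k·y^{k−n} for all y ∈ I, then B = 0, D = 0, B_k = 0, and (C·(n+1))^k = A_k. -/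
/-!
Multiplying the identity by `y ^ (k * (n - 1))` clears the negative powers and gives
`(B + y ^ n * (F * y + E)) ^ k = y ^ ((k - 1) * n) * (A_k * y ^ n + B_k)` with `E = C (n + 1)`,
`F = D (n + 2)`. Holding on an interval, this is an identity of polynomials. Evaluating at `0`
gives `B = 0`; cancelling `X ^ ((k - 1) * n)` and evaluating at `0` again gives `B_k = 0`;
cancelling `X ^ n` leaves `(F X + E) ^ k = A_k`, whose degree `k` forces `F = 0`.
-/

namespace Polynomial

variable {R : Type*} [CommRing R] [IsDomain R]

theorem eq_zero_and_pow_eq_of_linear_pow_eq_C {e f α : R} {k : ℕ} (hk : k ≠ 0)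
    (h : (C f * X + C e) ^ k = C α) : f = 0 ∧ e ^ k = α := by
  have hf : f = 0 := by
    by_contra hf
    have := congrArg natDegree h
    rw [natDegree_pow, natDegree_linear hf, natDegree_C] at this
    omega
  subst hf
  refine ⟨rfl, C_injective ?_⟩
  simpa using h

theorem eq_zero_and_pow_eq_of_C_add_X_pow_mul_pow_eq {b e f α β : R} {n k : ℕ} (hn : n ≠ 0)
    (hk : 2 ≤ k)
    (h : (C b + X ^ n * (C f * X + C e)) ^ k = X ^ ((k - 1) * n) * (C α * X ^ n + C β)) :
    b = 0 ∧ f = 0 ∧ β = 0 ∧ e ^ k = α := by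
  have hb : b ^ k = 0 := by
    simpa [hn, show k - 1 ≠ 0 by omega] using congrArg (eval 0) h
  replace hb : b = 0 := pow_eq_zero_iff (by omega) |>.mp hb
  subst hb
  have h₁ : X ^ n * (C f * X + C e) ^ k = C α * X ^ n + C β := by
    refine mul_left_cancel₀ (pow_ne_zero ((k - 1) * n) X_ne_zero) ?_
    rw [← h, map_zero, zero_add, mul_pow, ← mul_assoc, ← pow_mul, ← pow_add]
    congr 2
    obtain ⟨k, rfl⟩ : ∃ m, k = m + 1 := ⟨k - 1, by omega⟩
    simp only [add_tsub_cancel_right]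
    ring
  have hβ : β = 0 := by
    simpa [hn] using (congrArg (eval 0) h₁).symm
  subst hβ
  have h₂ : (C f * X + C e) ^ k = C α :=
    mul_left_cancel₀ (pow_ne_zero n X_ne_zero) (by rw [h₁, map_zero, add_zero, mul_comm])
  obtain ⟨hf, he⟩ := eq_zero_and_pow_eq_of_linear_pow_eq_C (by omega) h₂
  exact ⟨rfl, hf, rfl, he⟩

end Polynomial

theorem add_pow_mul_pow_eq_of_zpow_eq {K : Type*} [Field K] {b e f α β y : K} {n k : ℕ}
    (hy : y ≠ 0) (hk : k ≠ 0)
    (h : (b * y ^ ((1 : ℤ) - n) + e * y + f * y ^ 2) ^ k = α * y ^ k + β * y ^ ((k : ℤ) - n)) :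
    (b + y ^ n * (f * y + e)) ^ k = y ^ ((k - 1) * n) * (α * y ^ n + β) := by
  rw [zpow_sub₀ hy, zpow_sub₀ hy, zpow_one, zpow_natCast, zpow_natCast] at h
  have hz : y ^ n ≠ 0 := pow_ne_zero n hy
  obtain ⟨k, rfl⟩ : ∃ m, k = m + 1 := ⟨k - 1, by omega⟩
  have hfactor : b * (y / y ^ n) + e * y + f * y ^ 2 = y / y ^ n * (b + y ^ n * (f * y + e)) := by
    field_simp
    ring
  rw [hfactor, mul_pow] at h
  simp only [add_tsub_cancel_right]
  refine mul_left_cancel₀ (pow_ne_zero (k + 1) (div_ne_zero hy hz)) ?_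
  rw [h, mul_comm k n, pow_mul]
  generalize y ^ n = z at hz ⊢
  rw [div_pow, pow_succ z]
  field_simp

theorem stmt_6 (n k : ℕ) (hk : 2 ≤ k) (hkn : k ≤ n) (B C D Ak Bk : ℝ)
    (a b : ℝ) (hab : a < b) (ha : 0 ≤ a)
    (heq : ∀ y ∈ Set.Ioo a b,
        (B * y ^ ((1 : ℤ) - (n : ℤ)) + C * ((n : ℝ) + 1) * y + D * ((n : ℝ) + 2) * y ^ 2) ^ k
          = Ak * y ^ k + Bk * y ^ ((k : ℤ) - (n : ℤ))) :
    B = 0 ∧ D = 0 ∧ Bk = 0 ∧ (C * ((n : ℝ) + 1)) ^ k = Ak := by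
  open Polynomial in
  have hpoly : (Polynomial.C B
        + X ^ n * (Polynomial.C (D * (n + 2)) * X + Polynomial.C (C * (n + 1)))) ^ k
      = X ^ ((k - 1) * n) * (Polynomial.C Ak * X ^ n + Polynomial.C Bk) := by
    refine eq_of_infinite_eval_eq _ _ ((Set.Ioo_infinite hab).mono fun y hy => ?_)
    simpa using add_pow_mul_pow_eq_of_zpow_eq (ha.trans_lt hy.1).ne' (by omega) (heq y hy)
  obtain ⟨rfl, hD, rfl, hAk⟩ :=
    Polynomial.eq_zero_and_pow_eq_of_C_add_X_pow_mul_pow_eq (by omega) hk hpoly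
  exact ⟨rfl, (mul_eq_zero.mp hD).resolve_right (by positivity), rfl, hAk⟩
end

section
/- Let n ≥ 2 be an integer, let μ, λ, ν ∈ ℝ with μ ≠ 0, let k be an integer with 1 ≤ k ≤ n, let I ⊆ (0,∞) be a nonempty open interval, and define σ(y) = μ·ν·e^{μy}·y^{1−n} + n·λ/μ + ((λ−μ)/μ^{1+n})·∑_{j=1}^{n−1} (n!/(j−1)!)·μ^j·y^{n−j}. If there exist constants A, B ∈ ℝ such that (n − σ(y))^k = A·y^k + B·y^{k−n} for all y ∈ I, then ν = 0 and λ = μ. -/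
/-!
Write `n - σ(y) = S(y) - μν e^{μy} y^{1-n}` for an explicit polynomial `S`. Multiplying the
hypothesis by `y^{(n-1)k}` turns it into `(S(y) y^{n-1} - μν e^{μy})^k = q(y)` for a polynomial `q`;
both sides are entire, so this holds on all of `ℝ`, and dividing by `e^{kμy}` and letting
`μy → ∞` gives `μν = 0`. What is left is the polynomial identity `S^k X^{n-k} = A X^n + B`.
If `λ ≠ μ`, then `S(0) = n(μ - λ)/μ` and `S'(0)` are nonzero; for `k < n` the coefficient of
`X^{n-k}` on the left is `S(0)^k`, for `k = n` the coefficient of `X` is `n S(0)^{n-1} S'(0)`,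
and both vanish on the right.
-/

open Polynomial Filter Topology Real Set

namespace Polynomial

theorem tendsto_eval_div_exp_atTop (p : ℝ[X]) :
    Tendsto (fun t => p.eval t / exp t) atTop (𝓝 0) := by
  have hp : (fun t => p.eval t) =O[atTop] fun t => t ^ p.natDegree := by
    simpa using p.isBigO_atTop_of_degree_le (X ^ p.natDegree) (by simp [degree_le_natDegree])
  exact (hp.trans_isLittleO isLittleO_pow_exp_atTop).tendsto_div_nhds_zero

theorem eq_zero_of_forall_pow_sub_mul_exp_eq_eval (p q : ℝ[X]) {c : ℝ} {k : ℕ} (hk : k ≠ 0)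
    (h : ∀ t, (p.eval t - c * exp t) ^ k = q.eval t) : c = 0 := by
  obtain ⟨k, rfl⟩ := Nat.exists_eq_add_one_of_ne_zero hk
  have hlim : Tendsto (fun t => (p.eval t / exp t - c) ^ (k + 1)) atTop (𝓝 ((0 - c) ^ (k + 1))) :=
    ((tendsto_eval_div_exp_atTop p).sub_const c).pow _
  have hlim' : Tendsto (fun t => (p.eval t / exp t - c) ^ (k + 1)) atTop (𝓝 (0 * 0 ^ k)) := by
    refine ((tendsto_eval_div_exp_atTop q).mul
      ((tendsto_inv_atTop_zero.comp tendsto_exp_atTop).pow k)).congr fun t => ?_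
    rw [Function.comp_apply, ← h t, div_sub' (exp_ne_zero t), div_pow, pow_succ (exp t), inv_pow]
    field_simp
  simpa using tendsto_nhds_unique hlim hlim'

theorem pow_sub_mul_exp_eq_eval_of_forall_mem_Ioo (p q : ℝ[X]) (c μ : ℝ) (k : ℕ) {a b : ℝ}
    (hab : a < b) (h : ∀ y ∈ Ioo a b, (p.eval y - c * exp (μ * y)) ^ k = q.eval y) (y : ℝ) :
    (p.eval y - c * exp (μ * y)) ^ k = q.eval y := by
  have hf : AnalyticOnNhd ℝ (fun y => (p.eval y - c * exp (μ * y)) ^ k) univ := by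
    intro x _
    have := AnalyticOnNhd.eval_polynomial (𝕜 := ℝ) p x trivial
    fun_prop
  have hmid : (a + b) / 2 ∈ Ioo a b := ⟨by linarith, by linarith⟩
  exact congrFun (hf.eq_of_eventuallyEq (AnalyticOnNhd.eval_polynomial q)
    (eventually_of_mem (Ioo_mem_nhds hmid.1 hmid.2) h)) y

theorem eq_zero_of_pow_sub_mul_exp_eq_eval_on_Ioo (p q : ℝ[X]) {c μ : ℝ} (hμ : μ ≠ 0) {k : ℕ}
    (hk : k ≠ 0) {a b : ℝ} (hab : a < b)
    (h : ∀ y ∈ Ioo a b, (p.eval y - c * exp (μ * y)) ^ k = q.eval y) : c = 0 := by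
  refine eq_zero_of_forall_pow_sub_mul_exp_eq_eval (p.comp (C μ⁻¹ * X)) (q.comp (C μ⁻¹ * X)) hk
    fun t => ?_
  simpa [mul_inv_cancel_left₀ hμ] using
    pow_sub_mul_exp_eq_eval_of_forall_mem_Ioo p q c μ k hab h (μ⁻¹ * t)

theorem coeff_one_pow {R : Type*} [CommRing R] (S : R[X]) (k : ℕ) :
    (S ^ k).coeff 1 = k * S.coeff 1 * S.coeff 0 ^ (k - 1) := by
  simpa [← Polynomial.coe_pow, Polynomial.coeff_coe] using
    PowerSeries.coeff_one_pow k (S : PowerSeries R)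

theorem pow_mul_X_pow_ne_C_mul_X_pow_add_C {R : Type*} [CommRing R] [IsDomain R] [CharZero R]
    {S : R[X]} (h0 : S.coeff 0 ≠ 0) (h1 : S.coeff 1 ≠ 0) {n k : ℕ} (hn : 2 ≤ n) (hk1 : 1 ≤ k)
    (hk2 : k ≤ n) (A B : R) : S ^ k * X ^ (n - k) ≠ C A * X ^ n + C B := by
  intro h
  rcases hk2.lt_or_eq with hlt | rfl
  · have := congrArg (coeff · (n - k)) h
    rw [coeff_mul_X_pow', if_pos le_rfl, Nat.sub_self, coeff_add, coeff_C_mul_X_pow, coeff_C,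
      if_neg (by omega), if_neg (by omega), add_zero, coeff_zero_eq_eval_zero, eval_pow,
      ← coeff_zero_eq_eval_zero] at this
    exact h0 (pow_eq_zero_iff (by omega) |>.mp this)
  · have := congrArg (coeff · 1) h
    simp only [Nat.sub_self, pow_zero, mul_one, coeff_add, coeff_C_mul_X_pow, coeff_C] at this
    rw [if_neg (by omega), if_neg (by omega), add_zero, coeff_one_pow] at this
    simp [h0, h1] at this
    omega

end Polynomial

theorem mul_pow_add_mul_zpow_sub_mul_pow_sub {K : Type*} [Field K] {y : K} (hy : y ≠ 0) (A B : K)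
    {k n : ℕ} (h : k ≤ n) : (A * y ^ k + B * y ^ ((k : ℤ) - n)) * y ^ (n - k) = A * y ^ n + B := by
  rw [add_mul, mul_assoc, mul_assoc, ← pow_add, Nat.add_sub_cancel' h, ← zpow_natCast (n := n - k),
    ← zpow_add₀ hy, Nat.cast_sub h, sub_add_sub_cancel, sub_self, zpow_zero, mul_one]

theorem eq_zero_of_pow_sub_mul_exp_mul_zpow_eq (S : ℝ[X]) {c μ : ℝ} (hμ : μ ≠ 0) {n k : ℕ}
    (hk1 : 1 ≤ k) (hk2 : k ≤ n) {a b : ℝ} (hab : a < b) (ha : 0 ≤ a) {A B : ℝ}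
    (h : ∀ y ∈ Ioo a b, (S.eval y - c * exp (μ * y) * y ^ ((1 : ℤ) - n)) ^ k =
      A * y ^ k + B * y ^ ((k : ℤ) - n)) :
    c = 0 := by
  have hexp : (n - 1) * k = (n - k) + n * (k - 1) := by
    zify [hk1, hk2, hk1.trans hk2]; ring
  refine eq_zero_of_pow_sub_mul_exp_eq_eval_on_Ioo (S * X ^ (n - 1))
    (X ^ (n * (k - 1)) * (C A * X ^ n + C B)) hμ (Nat.one_le_iff_ne_zero.mp hk1) hab
    fun y hyI => ?_
  have hy : y ≠ 0 := (ha.trans_lt hyI.1).ne'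
  have hmul : (S.eval y - c * exp (μ * y) * y ^ ((1 : ℤ) - n)) * y ^ (n - 1) =
      (S * X ^ (n - 1)).eval y - c * exp (μ * y) := by
    have := mul_pow_add_mul_zpow_sub_mul_pow_sub hy 0 1 (hk1.trans hk2)
    simp only [zero_mul, zero_add, one_mul, Nat.cast_one] at this
    rw [eval_mul, eval_pow, eval_X, sub_mul, mul_assoc _ (y ^ _), this, mul_one]
  rw [← hmul, mul_pow, ← pow_mul, hexp, pow_add, ← mul_assoc, h y hyI,
    mul_pow_add_mul_zpow_sub_mul_pow_sub hy A B hk2]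
  simp only [eval_mul, eval_pow, eval_X, eval_add, eval_C]
  ring

theorem pow_mul_X_pow_eq_of_eval_pow_eq (S : ℝ[X]) {n k : ℕ} (hk : k ≤ n) {a b : ℝ} (hab : a < b)
    (ha : 0 ≤ a) {A B : ℝ} (h : ∀ y ∈ Ioo a b, S.eval y ^ k = A * y ^ k + B * y ^ ((k : ℤ) - n)) :
    S ^ k * X ^ (n - k) = C A * X ^ n + C B := by
  refine eq_of_infinite_eval_eq _ _ ((Ioo_infinite hab).mono fun y hy => ?_)
  simp only [mem_ofPred_eq, eval_mul, eval_pow, eval_X, eval_add, eval_C]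
  rw [h y hy, mul_pow_add_mul_zpow_sub_mul_pow_sub (ha.trans_lt hy.1).ne' A B hk]

/-- `n - σ(y) = (profilePoly n μ lam).eval y - μ ν e^{μ y} y^{1-n}`. -/
noncomputable def profilePoly (n : ℕ) (μ lam : ℝ) : ℝ[X] :=
  C (n - n * lam / μ) - C ((lam - μ) / μ ^ (1 + n)) *
    ∑ j ∈ Finset.Icc 1 (n - 1),
      C ((Nat.factorial n / Nat.factorial (j - 1) : ℕ) * μ ^ j) * X ^ (n - j)

theorem eval_profilePoly (n : ℕ) (μ lam y : ℝ) :
    (profilePoly n μ lam).eval y = n - n * lam / μ - (lam - μ) / μ ^ (1 + n) *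
      ∑ j ∈ Finset.Icc 1 (n - 1),
        ((Nat.factorial n / Nat.factorial (j - 1) : ℕ) : ℝ) * μ ^ j * y ^ (n - j) := by
  simp [profilePoly, eval_finsetSum]

theorem profilePoly_coeff_zero (n : ℕ) (μ lam : ℝ) :
    (profilePoly n μ lam).coeff 0 = n - n * lam / μ := by
  rw [profilePoly, coeff_sub, coeff_C_zero, coeff_C_mul, finsetSum_coeff,
    Finset.sum_eq_zero fun j hj => ?_, mul_zero, sub_zero]
  rw [coeff_C_mul_X_pow, if_neg (by grind)]

theorem profilePoly_coeff_one {n : ℕ} (hn : 2 ≤ n) (μ lam : ℝ) :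
    (profilePoly n μ lam).coeff 1 =
      -((lam - μ) / μ ^ (1 + n) *
        ((Nat.factorial n / Nat.factorial (n - 2) : ℕ) * μ ^ (n - 1))) := by
  rw [profilePoly, coeff_sub, coeff_C, if_neg one_ne_zero, coeff_C_mul, finsetSum_coeff,
    Finset.sum_eq_single (n - 1), coeff_C_mul_X_pow, if_pos (by omega), zero_sub,
    show n - 1 - 1 = n - 2 by omega]
  · intro j hj hjn
    rw [coeff_C_mul_X_pow, if_neg (by grind)]
  · intro h
    exact absurd (Finset.mem_Icc.mpr ⟨by omega, le_rfl⟩) h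

theorem profilePoly_coeff_zero_ne_zero {n : ℕ} (hn : n ≠ 0) {μ lam : ℝ} (hμ : μ ≠ 0)
    (hlam : lam ≠ μ) : (profilePoly n μ lam).coeff 0 ≠ 0 := by
  rw [profilePoly_coeff_zero, show (n : ℝ) - n * lam / μ = n * (μ - lam) / μ by field_simp]
  simp [hn, hμ, sub_eq_zero, hlam.symm]

theorem profilePoly_coeff_one_ne_zero {n : ℕ} (hn : 2 ≤ n) {μ lam : ℝ} (hμ : μ ≠ 0)
    (hlam : lam ≠ μ) : (profilePoly n μ lam).coeff 1 ≠ 0 := by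
  have hfac : (Nat.factorial n / Nat.factorial (n - 2) : ℕ) ≠ 0 :=
    (Nat.div_pos (Nat.factorial_le (by omega)) (Nat.factorial_pos _)).ne'
  rw [profilePoly_coeff_one hn]
  simp [hfac, hμ, sub_eq_zero, hlam]

theorem stmt_7 (n : ℕ) (hn : 2 ≤ n) (μ lam ν : ℝ) (hμ : μ ≠ 0)
    (k : ℕ) (hk1 : 1 ≤ k) (hk2 : k ≤ n)
    (a b : ℝ) (hab : a < b) (ha : 0 ≤ a)
    (σ : ℝ → ℝ)
    (hσ : ∀ y : ℝ, σ y = μ * ν * Real.exp (μ * y) * y ^ ((1 : ℤ) - (n : ℤ))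
        + (n : ℝ) * lam / μ
        + ((lam - μ) / μ ^ (1 + n)) *
            ∑ j ∈ Finset.Icc 1 (n - 1), ((Nat.factorial n / Nat.factorial (j - 1) : ℕ) : ℝ) * μ ^ j * y ^ (n - j))
    (hconst : ∃ A B : ℝ, ∀ y ∈ Set.Ioo a b,
        ((n : ℝ) - σ y) ^ k = A * y ^ k + B * y ^ ((k : ℤ) - (n : ℤ))) :
    ν = 0 ∧ lam = μ := by
  obtain ⟨A, B, hAB⟩ := hconst
  have hσS (y : ℝ) :
      n - σ y = (profilePoly n μ lam).eval y - μ * ν * exp (μ * y) * y ^ ((1 : ℤ) - n) := by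
    rw [hσ, eval_profilePoly]; ring
  simp only [hσS] at hAB
  have hν : ν = 0 := (mul_eq_zero.mp
    (eq_zero_of_pow_sub_mul_exp_mul_zpow_eq _ hμ hk1 hk2 hab ha hAB)).resolve_left hμ
  simp only [hν, mul_zero, zero_mul, sub_zero] at hAB
  refine ⟨hν, by_contra fun hlam => pow_mul_X_pow_ne_C_mul_X_pow_add_C
    (profilePoly_coeff_zero_ne_zero (by omega) hμ hlam) (profilePoly_coeff_one_ne_zero hn hμ hlam)
    hn hk1 hk2 A B (pow_mul_X_pow_eq_of_eval_pow_eq _ hk2 hab ha hAB)⟩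
end

section
/- Let n ≥ 2 be an integer, let μ, λ ∈ ℝ with μ ≠ 0, let I ⊆ (0,∞) be a nonempty open interval, and let ψ : ℝ → ℝ be differentiable on I. Then ψ'(y) = (μ − (n−1)/y)·ψ(y) + n − λ·y for all y ∈ I if and only if there exists ν ∈ ℝ such that ψ(y) = ν·e^{μy}·y^{1−n} + (λ/μ)·y + ((λ−μ)/μ^{1+n})·∑_{j=0}^{n−1} (n!/j!)·μ^j·y^{j+1−n} for all y ∈ I. -/
/-!
The equation is linear of first order. The function `e^{μy} y^{1-n}` solves the homogeneous
equation and `(λ/μ) y + ((λ-μ)/μ^{1+n}) ∑ⱼ (n!/j!) μ^j y^{j+1-n}` is a particular solution; for the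
latter, the sum telescopes because `(j+1) · n!/(j+1)! = n!/j!`. Any other solution differs from
the particular one by a solution `ψ₀` of the homogeneous equation, and `ψ₀ / (e^{μy} y^{1-n})`
has zero derivative on the interval, hence is a constant `ν`.
-/

open Finset Nat

section LinearODE

variable {𝕜 : Type*} [RCLike 𝕜] {s : Set 𝕜} {p q g h ψ : 𝕜 → 𝕜}

theorem deriv_eq_mul_add_iff_exists_eq_mul_add (hs : IsOpen s) (hs' : IsPreconnected s)
    (hg : ∀ y ∈ s, HasDerivAt g (p y * g y + q y) y)
    (hh : ∀ y ∈ s, HasDerivAt h (p y * h y) y) (hh₀ : ∀ y ∈ s, h y ≠ 0)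
    (hψ : ∀ y ∈ s, DifferentiableAt 𝕜 ψ y) :
    (∀ y ∈ s, deriv ψ y = p y * ψ y + q y) ↔ ∃ ν, ∀ y ∈ s, ψ y = ν * h y + g y := by
  constructor
  · intro hψ'
    have hquot : ∀ y ∈ s, HasDerivAt (fun y ↦ (ψ y - g y) / h y) 0 y := by
      intro y hy
      refine (((hψ y hy).hasDerivAt.fun_sub (hg y hy)).fun_div (hh y hy) (hh₀ y hy)).congr_deriv ?_
      rw [hψ' y hy]
      ring
    obtain ⟨ν, hν⟩ := hs.exists_is_const_of_deriv_eq_zero hs'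
      (fun y hy ↦ (hquot y hy).differentiableAt.differentiableWithinAt)
      (fun y hy ↦ (hquot y hy).deriv)
    refine ⟨ν, fun y hy ↦ ?_⟩
    rw [← hν y hy, div_mul_cancel₀ _ (hh₀ y hy), sub_add_cancel]
  · rintro ⟨ν, hν⟩ y hy
    have hψ_eq : ψ =ᶠ[nhds y] fun y ↦ ν * h y + g y :=
      Filter.eventuallyEq_of_mem (hs.mem_nhds hy) hν
    rw [hψ_eq.deriv_eq, (((hh y hy).const_mul ν).fun_add (hg y hy)).deriv, hν y hy]
    ring

end LinearODE

section SolitonProfile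

variable {n : ℕ} {μ y : ℝ}

noncomputable def solitonTerm (n : ℕ) (μ : ℝ) (j : ℕ) (y : ℝ) : ℝ :=
  ((n ! / j ! : ℕ) : ℝ) * μ ^ j * y ^ ((j : ℤ) + 1 - n)

theorem hasDerivAt_solitonTerm (j : ℕ) (hy : y ≠ 0) :
    HasDerivAt (solitonTerm n μ j) (((j : ℝ) + 1 - n) / y * solitonTerm n μ j y) y := by
  refine ((hasDerivAt_zpow _ y (Or.inl hy)).const_mul
    (((n ! / j ! : ℕ) : ℝ) * μ ^ j)).congr_deriv ?_
  rw [solitonTerm, zpow_sub_one₀ hy]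
  push_cast
  ring

theorem solitonTerm_self : solitonTerm n μ n y = μ ^ n * y := by
  simp [solitonTerm, Nat.div_self (factorial_pos n)]

theorem succ_mul_solitonTerm_succ {j : ℕ} (hj : j < n) (hy : y ≠ 0) :
    ((j : ℝ) + 1) * solitonTerm n μ (j + 1) y = μ * y * solitonTerm n μ j y := by
  have hcoeff : ((j : ℝ) + 1) * ((n ! / (j + 1) ! : ℕ) : ℝ) = ((n ! / j ! : ℕ) : ℝ) := by
    rw [Nat.cast_div (factorial_dvd_factorial hj) (by positivity),
      Nat.cast_div (factorial_dvd_factorial hj.le) (by positivity), factorial_succ]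
    push_cast
    field_simp
  have hexp : ((j + 1 : ℕ) : ℤ) + 1 - n = ((j : ℤ) + 1 - n) + 1 := by push_cast; ring
  rw [solitonTerm, solitonTerm, hexp, zpow_add_one₀ hy, ← hcoeff]
  ring

theorem sum_solitonTerm_telescope (hy : y ≠ 0) :
    ∑ j ∈ range n, (μ * solitonTerm n μ j y - j / y * solitonTerm n μ j y) = n * μ ^ n := by
  calc ∑ j ∈ range n, (μ * solitonTerm n μ j y - j / y * solitonTerm n μ j y)
      = ∑ j ∈ range n, (((j + 1 : ℕ) : ℝ) / y * solitonTerm n μ (j + 1) y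
          - j / y * solitonTerm n μ j y) := by
        refine sum_congr rfl fun j hj ↦ ?_
        rw [Nat.cast_succ, div_mul_eq_mul_div ((j : ℝ) + 1),
          succ_mul_solitonTerm_succ (mem_range.1 hj) hy]
        field_simp
    _ = n / y * solitonTerm n μ n y - ((0 : ℕ) : ℝ) / y * solitonTerm n μ 0 y :=
        sum_range_sub (fun j ↦ (j : ℝ) / y * solitonTerm n μ j y) n
    _ = n * μ ^ n := by
        rw [solitonTerm_self, Nat.cast_zero, zero_div, zero_mul, sub_zero]
        field_simp

theorem hasDerivAt_sum_solitonTerm (hy : y ≠ 0) :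
    HasDerivAt (fun y ↦ ∑ j ∈ range n, solitonTerm n μ j y)
      ((μ - ((n : ℝ) - 1) / y) * ∑ j ∈ range n, solitonTerm n μ j y - n * μ ^ n) y := by
  refine (HasDerivAt.fun_sum fun j _ ↦ hasDerivAt_solitonTerm j hy).congr_deriv ?_
  rw [← sum_solitonTerm_telescope hy, mul_sum, ← sum_sub_distrib]
  exact sum_congr rfl fun _ _ ↦ by ring

theorem hasDerivAt_exp_mul_zpow (hy : y ≠ 0) :
    HasDerivAt (fun y ↦ Real.exp (μ * y) * y ^ ((1 : ℤ) - n))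
      ((μ - ((n : ℝ) - 1) / y) * (Real.exp (μ * y) * y ^ ((1 : ℤ) - n))) y := by
  have hexp : HasDerivAt (fun y ↦ Real.exp (μ * y)) (Real.exp (μ * y) * μ) y := by
    simpa using ((hasDerivAt_id y).const_mul μ).exp
  refine (hexp.fun_mul (hasDerivAt_zpow _ y (Or.inl hy))).congr_deriv ?_
  rw [zpow_sub_one₀ hy]
  push_cast
  ring

theorem hasDerivAt_mul_add_sum_solitonTerm (lam : ℝ) (hμ : μ ≠ 0) (hy : y ≠ 0) :
    HasDerivAt (fun y ↦ lam / μ * y + (lam - μ) / μ ^ (1 + n) * ∑ j ∈ range n, solitonTerm n μ j y)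
      ((μ - ((n : ℝ) - 1) / y) *
          (lam / μ * y + (lam - μ) / μ ^ (1 + n) * ∑ j ∈ range n, solitonTerm n μ j y)
        + (n - lam * y)) y := by
  refine (((hasDerivAt_id y).const_mul (lam / μ)).fun_add
    ((hasDerivAt_sum_solitonTerm hy).const_mul ((lam - μ) / μ ^ (1 + n)))).congr_deriv ?_
  rw [pow_add]
  field_simp
  ring

end SolitonProfile

theorem stmt_8_general (n : ℕ) (μ lam : ℝ) (hμ : μ ≠ 0)
    (a b : ℝ) (ha : 0 ≤ a)
    (ψ : ℝ → ℝ) (hψ : ∀ y ∈ Set.Ioo a b, DifferentiableAt ℝ ψ y) :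
    (∀ y ∈ Set.Ioo a b,
        deriv ψ y = (μ - ((n : ℝ) - 1) / y) * ψ y + (n : ℝ) - lam * y) ↔
      ∃ ν : ℝ, ∀ y ∈ Set.Ioo a b,
        ψ y = ν * Real.exp (μ * y) * y ^ ((1 : ℤ) - (n : ℤ)) + (lam / μ) * y
          + ((lam - μ) / μ ^ (1 + n)) *
              ∑ j ∈ Finset.range n, ((Nat.factorial n / Nat.factorial j : ℕ) : ℝ) * μ ^ j * y ^ ((j : ℤ) + 1 - (n : ℤ)) := by
  have hy₀ : ∀ y ∈ Set.Ioo a b, y ≠ 0 := fun y hy ↦ (ha.trans_lt hy.1).ne'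
  have hsol := deriv_eq_mul_add_iff_exists_eq_mul_add isOpen_Ioo isPreconnected_Ioo
    (fun y hy ↦ hasDerivAt_mul_add_sum_solitonTerm (n := n) lam hμ (hy₀ y hy))
    (fun y hy ↦ hasDerivAt_exp_mul_zpow (n := n) (hy₀ y hy))
    (fun y hy ↦ mul_ne_zero (Real.exp_ne_zero _) (zpow_ne_zero _ (hy₀ y hy))) hψ
  simp only [solitonTerm, mul_assoc, add_assoc, add_sub_assoc] at hsol ⊢
  exact hsol

theorem stmt_8 (n : ℕ) (hn : 2 ≤ n) (μ lam : ℝ) (hμ : μ ≠ 0)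
    (a b : ℝ) (hab : a < b) (ha : 0 ≤ a)
    (ψ : ℝ → ℝ) (hψ : ∀ y ∈ Set.Ioo a b, DifferentiableAt ℝ ψ y) :
    (∀ y ∈ Set.Ioo a b,
        deriv ψ y = (μ - ((n : ℝ) - 1) / y) * ψ y + (n : ℝ) - lam * y) ↔
      ∃ ν : ℝ, ∀ y ∈ Set.Ioo a b,
        ψ y = ν * Real.exp (μ * y) * y ^ ((1 : ℤ) - (n : ℤ)) + (lam / μ) * y
          + ((lam - μ) / μ ^ (1 + n)) *
              ∑ j ∈ Finset.range n, ((Nat.factorial n / Nat.factorial j : ℕ) : ℝ) * μ ^ j * y ^ ((j : ℤ) + 1 - (n : ℤ)) :=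
  stmt_8_general n μ lam hμ a b ha ψ hψ
end

section
/- Let μ, λ ∈ ℝ with μ < 0 and λ < −(5/4)·μ. Define ψ(y) = (λ/μ)·y + ((λ−μ)/μ⁴)·(6/y² + 6μ/y + 3μ²) for y > 0. Then: (a) for all y > 0, ψ''(y) = (12(λ−μ)/(μ⁴·y⁴))·(3 + μ·y); (b) ψ(−3/μ) = (−4λ − 5μ)/(3μ²), and this value is positive; (c) if moreover λ ≠ μ, then ψ'' changes sign at y = −3/μ, i.e. ψ'' is nonzero with one sign on (0, −3/μ) and the opposite sign on (−3/μ, ∞). -/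
theorem stmt_16 (μ lam : ℝ) (hμ : μ < 0) (hlam : lam < -(5 / 4) * μ)
    (ψ : ℝ → ℝ)
    (hψ : ∀ y : ℝ, ψ y = (lam / μ) * y
        + ((lam - μ) / μ ^ 4) * (6 / y ^ 2 + 6 * μ / y + 3 * μ ^ 2)) :
    (∀ y : ℝ, 0 < y →
        deriv (deriv ψ) y = (12 * (lam - μ) / (μ ^ 4 * y ^ 4)) * (3 + μ * y)) ∧
    (ψ (-3 / μ) = (-4 * lam - 5 * μ) / (3 * μ ^ 2) ∧ 0 < (-4 * lam - 5 * μ) / (3 * μ ^ 2)) ∧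
    (lam ≠ μ →
      ((∀ y : ℝ, 0 < y → y < -3 / μ → 0 < deriv (deriv ψ) y) ∧
          (∀ y : ℝ, -3 / μ < y → deriv (deriv ψ) y < 0)) ∨
        ((∀ y : ℝ, 0 < y → y < -3 / μ → deriv (deriv ψ) y < 0) ∧
          (∀ y : ℝ, -3 / μ < y → 0 < deriv (deriv ψ) y))) := by
  have hμ0 : μ ≠ 0 := ne_of_lt hμ
  set C : ℝ := (lam - μ) / μ ^ 4 with hC
  -- first derivative
  have hd1 : ∀ y : ℝ, y ≠ 0 →
      HasDerivAt ψ (lam / μ + C * (-12 / y ^ 3 - 6 * μ / y ^ 2)) y := by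
    intro y hy
    have h2 : HasDerivAt (fun t : ℝ => t ^ 2) (2 * y) y := by
      simpa using hasDerivAt_pow 2 y
    have hA : HasDerivAt (fun t : ℝ => 6 / t ^ 2) (-12 / y ^ 3) y := by
      have := (hasDerivAt_const y (6:ℝ)).fun_div h2 (pow_ne_zero 2 hy)
      refine this.congr_deriv ?_
      field_simp
      ring
    have hB : HasDerivAt (fun t : ℝ => 6 * μ / t) (-(6 * μ) / y ^ 2) y := by
      have := (hasDerivAt_const y (6*μ)).fun_div (hasDerivAt_id y) hy
      refine this.congr_deriv ?_
      simp only [id]; field_simp; ring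
    have hF : HasDerivAt (fun t : ℝ => (lam / μ) * t
        + C * (6 / t ^ 2 + 6 * μ / t + 3 * μ ^ 2))
        (lam / μ + C * (-12 / y ^ 3 - 6 * μ / y ^ 2)) y := by
      have := ((hasDerivAt_id y).const_mul (lam / μ)).add
        ((((hA.add hB).add (hasDerivAt_const y (3 * μ ^ 2))).const_mul C))
      refine this.congr_deriv ?_
      ring
    exact hF.congr_of_eventuallyEq (Filter.Eventually.of_forall fun t => (hψ t))
  have key : ∀ y : ℝ, y ≠ 0 →
      deriv (deriv ψ) y = (12 * (lam - μ) / (μ ^ 4 * y ^ 4)) * (3 + μ * y) := by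
    intro y hy
    have hev : deriv ψ =ᶠ[nhds y]
        (fun t => lam / μ + C * (-12 / t ^ 3 - 6 * μ / t ^ 2)) := by
      filter_upwards [isOpen_compl_singleton.mem_nhds hy] with t ht
      exact (hd1 t ht).deriv
    rw [hev.deriv_eq]
    have h3 : HasDerivAt (fun t : ℝ => t ^ 3) (3 * y ^ 2) y := by
      simpa using hasDerivAt_pow 3 y
    have h2 : HasDerivAt (fun t : ℝ => t ^ 2) (2 * y) y := by
      simpa using hasDerivAt_pow 2 y
    have hA : HasDerivAt (fun t : ℝ => -12 / t ^ 3) (36 / y ^ 4) y := by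
      have := (hasDerivAt_const y (-12:ℝ)).fun_div h3 (pow_ne_zero 3 hy)
      refine this.congr_deriv ?_
      field_simp
      ring
    have hB : HasDerivAt (fun t : ℝ => 6 * μ / t ^ 2) (-(12 * μ) / y ^ 3) y := by
      have := (hasDerivAt_const y (6*μ)).fun_div h2 (pow_ne_zero 2 hy)
      refine this.congr_deriv ?_
      field_simp
      ring
    have hG : HasDerivAt (fun t : ℝ => lam / μ + C * (-12 / t ^ 3 - 6 * μ / t ^ 2))
        (C * (36 / y ^ 4 + 12 * μ / y ^ 3)) y := by
      have := (hasDerivAt_const y (lam / μ)).add ((hA.sub hB).const_mul C)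
      refine this.congr_deriv ?_
      ring
    rw [hG.deriv, hC]
    field_simp
    ring
  refine ⟨fun y hy => key y (ne_of_gt hy), ⟨?_, ?_⟩, ?_⟩
  · rw [hψ, hC]
    have e1 : (6:ℝ) / (-3 / μ) ^ 2 = 2 * μ ^ 2 / 3 := by
      field_simp
      ring
    have e2 : 6 * μ / (-3 / μ) = -2 * μ ^ 2 := by
      field_simp
      ring
    rw [e1, e2]
    field_simp
    ring
  · apply div_pos
    · nlinarith
    · nlinarith [sq_nonneg μ]
  · intro hne
    have h3μ : 0 < -3 / μ := by
      rw [div_pos_iff]; right; constructor <;> linarith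
    have heq : μ * (-3 / μ) = -3 := by field_simp
    rcases lt_or_gt_of_ne (sub_ne_zero.mpr hne) with h | h
    · -- lam - μ < 0
      right
      have hμ4 : 0 < μ ^ 4 := by positivity
      constructor
      · intro y hy hy2
        rw [key y (ne_of_gt hy)]
        have h3 : 0 < 3 + μ * y := by
          have : μ * y > μ * (-3 / μ) := (mul_lt_mul_left_of_neg hμ).mpr hy2
          linarith [heq]
        have : 12 * (lam - μ) / (μ ^ 4 * y ^ 4) < 0 := by
          apply div_neg_of_neg_of_pos
          · linarith
          · positivity
        exact mul_neg_of_neg_of_pos this h3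
      · intro y hy
        have hy0 : 0 < y := lt_trans h3μ hy
        rw [key y (ne_of_gt hy0)]
        have h3 : 3 + μ * y < 0 := by
          have : μ * y < μ * (-3 / μ) := (mul_lt_mul_left_of_neg hμ).mpr hy
          linarith [heq]
        have hneg : 12 * (lam - μ) / (μ ^ 4 * y ^ 4) < 0 := by
          apply div_neg_of_neg_of_pos
          · linarith
          · positivity
        exact mul_pos_of_neg_of_neg hneg h3
    · -- lam - μ > 0
      left
      constructor
      · intro y hy hy2
        rw [key y (ne_of_gt hy)]
        have h3 : 0 < 3 + μ * y := by
          have : μ * y > μ * (-3 / μ) := (mul_lt_mul_left_of_neg hμ).mpr hy2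
          linarith [heq]
        have hpos : 0 < 12 * (lam - μ) / (μ ^ 4 * y ^ 4) := by
          apply div_pos
          · linarith
          · positivity
        exact mul_pos hpos h3
      · intro y hy
        have hy0 : 0 < y := lt_trans h3μ hy
        rw [key y (ne_of_gt hy0)]
        have h3 : 3 + μ * y < 0 := by
          have : μ * y < μ * (-3 / μ) := (mul_lt_mul_left_of_neg hμ).mpr hy
          linarith [heq]
        have hpos : 0 < 12 * (lam - μ) / (μ ^ 4 * y ^ 4) := by
          apply div_pos
          · linarith
          · positivity
        exact mul_neg_of_pos_of_neg hpos h3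
end
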